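/- Let p be a prime, p ∤ c, c an integer > 1, and n ≥ 0. Then Σ_{ρ^p = 1} Σ_{ξ^c = 1, ξ ≠ 1} 𝔅_n(ρξ) = p^{n+1} (1 - c^{n+1}) B_{n+1}/(n+1), where the outer sum runs over all p-th roots of unity ρ (including 1) and the inner over nontrivial c-th roots of unity. -/

import Mathlib

open Polynomial

/-- The twisted Bernoulli numbers `𝔅_n(ξ)` (for `ξ ≠ 1`), defined by the expansion
`1/(1 - ξ e^t) = Σ_{n≥0} 𝔅_n(ξ) t^n/n!`. -/
noncomputable def twistedBernoulli (ξ : ℂ) (n : ℕ) : ℂ :=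
  (n.factorial : ℂ) * PowerSeries.coeff (R := ℂ) n (1 - PowerSeries.C (R := ℂ) ξ * PowerSeries.exp ℂ)⁻¹

/-!
Summing `1 / (1 - ω e^t)` over the nontrivial `N`-th roots of unity `ω` gives
`N / (1 - e^{Nt}) - 1 / (1 - e^t)`, and writing both terms through `t / (e^t - 1) = Σ B_k t^k / k!`
yields `Σ_{ω ≠ 1} 𝔅_n(ω) = (1 - N^{n+1}) B_{n+1} / (n + 1)`. As `p` and `c` are coprime,
`(ρ, ξ) ↦ ρ ξ` is a bijection `μ_p × μ_c → μ_{pc}`, so the double sum is the sum over `μ_{pc} ∖ {1}`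
minus the sum over `μ_p ∖ {1}`, and the two instances `N = pc` and `N = p` give the claim.
-/

open Finset PowerSeries

section RootsOfUnity

variable {K : Type*} [Field K] {ζ : K}

theorem IsPrimitiveRoot.sum_nthRootsFinset_pow_eq_zero {N : ℕ} (hζ : IsPrimitiveRoot ζ N)
    {k : ℕ} (hk : ¬ N ∣ k) : ∑ ω ∈ nthRootsFinset N (1 : K), ω ^ k = 0 := by
  classical
  rcases Nat.eq_zero_or_pos N with rfl | hN
  · simp
  set S := nthRootsFinset N (1 : K)
  have hζ0 : ζ ≠ 0 := hζ.ne_zero hN.ne'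
  have hζS : ζ ∈ S := hζ.mem_nthRootsFinset hN
  have hperm : S.image (ζ * ·) = S :=
    eq_of_subset_of_card_le
      (image_subset_iff.2 fun ω hω => by simpa using mul_mem_nthRootsFinset hζS hω)
      (card_image_of_injective _ (mul_right_injective₀ hζ0)).ge
  have hfix : ζ ^ k * ∑ ω ∈ S, ω ^ k = ∑ ω ∈ S, ω ^ k := by
    conv_rhs => rw [← hperm]
    rw [sum_image fun _ _ _ _ h => mul_left_cancel₀ hζ0 h, mul_sum]
    simp_rw [mul_pow]
  by_contra hne
  exact hk ((hζ.pow_eq_one_iff_dvd k).1 ((mul_eq_right₀ hne).1 hfix))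

theorem sum_nthRootsFinset_mul_of_coprime {M : Type*} [AddCommMonoid M] {p c : ℕ}
    (hp : 0 < p) (hc : 0 < c) (hζ : IsPrimitiveRoot ζ (p * c)) (hpc : p.Coprime c) (F : K → M) :
    ∑ ρ ∈ nthRootsFinset p (1 : K), ∑ ξ ∈ nthRootsFinset c (1 : K), F (ρ * ξ) =
      ∑ ω ∈ nthRootsFinset (p * c) (1 : K), F ω := by
  classical
  have hpc0 : 0 < p * c := Nat.mul_pos hp hc
  have hmem {x : K} {m : ℕ} (hm : 0 < m) : x ∈ nthRootsFinset m (1 : K) ↔ x ^ m = 1 :=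
    mem_nthRootsFinset hm 1
  have hinj : Set.InjOn (fun x : K × K => x.1 * x.2)
      ↑(nthRootsFinset p (1 : K) ×ˢ nthRootsFinset c (1 : K)) := by
    rintro ⟨ρ, ξ⟩ h ⟨ρ', ξ'⟩ h' heq
    simp only [coe_product, Set.mem_prod, mem_coe, hmem hp, hmem hc] at h h' heq
    have hρ0 : ρ' ≠ 0 := by rintro rfl; simp [hp.ne'] at h'
    have hρc : ρ ^ c = ρ' ^ c := by simpa [mul_pow, h.2, h'.2] using congrArg (· ^ c) heq
    -- `ρ / ρ'` is both a `p`-th and a `c`-th root of unity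
    have hρ : ρ = ρ' := (div_eq_one_iff_eq hρ0).1 <| (pow_eq_one_iff_of_coprime hpc).1
      ⟨by rw [div_pow, h.1, h'.1, div_one], by rw [div_pow, hρc, div_self (pow_ne_zero _ hρ0)]⟩
    subst hρ
    exact Prod.ext rfl (mul_left_cancel₀ hρ0 heq)
  have himage : (nthRootsFinset p (1 : K) ×ˢ nthRootsFinset c (1 : K)).image
      (fun x => x.1 * x.2) = nthRootsFinset (p * c) (1 : K) := by
    refine eq_of_subset_of_card_le (image_subset_iff.2 ?_) ?_
    · rintro ⟨ρ, ξ⟩ h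
      simp only [mem_product, hmem hp, hmem hc] at h
      rw [hmem hpc0, mul_pow, pow_mul, h.1, mul_comm p c, pow_mul, h.2, one_pow, one_pow, one_mul]
    · rw [card_image_of_injOn hinj, card_product, hζ.card_nthRootsFinset,
        (hζ.pow hpc0 (mul_comm p c)).card_nthRootsFinset, (hζ.pow hpc0 rfl).card_nthRootsFinset]
  rw [← himage, sum_image hinj, sum_product]

theorem sum_nthRootsFinset_mul_erase_one_of_coprime [DecidableEq K] {G : Type*} [AddCommGroup G]
    {p c : ℕ} (hp : 0 < p) (hc : 0 < c) (hζ : IsPrimitiveRoot ζ (p * c)) (hpc : p.Coprime c)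
    (F : K → G) :
    ∑ ρ ∈ nthRootsFinset p (1 : K), ∑ ξ ∈ (nthRootsFinset c (1 : K)).erase 1, F (ρ * ξ) =
      ∑ ω ∈ (nthRootsFinset (p * c) (1 : K)).erase 1, F ω -
        ∑ ρ ∈ (nthRootsFinset p (1 : K)).erase 1, F ρ := by
  simp_rw [sum_erase_eq_sub (one_mem_nthRootsFinset hc), mul_one, sum_sub_distrib,
    sum_nthRootsFinset_mul_of_coprime hp hc hζ hpc, sum_erase_eq_sub (one_mem_nthRootsFinset hp),
    sum_erase_eq_sub (one_mem_nthRootsFinset (Nat.mul_pos hp hc))]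
  abel

end RootsOfUnity

section PowerSeries

variable {K : Type*} [Field K]

theorem PowerSeries.inv_one_sub_C_mul_mul_one_sub_pow {N : ℕ} {ω : K} (hω : ω ^ N = 1)
    {f : K⟦X⟧} (hf : constantCoeff (1 - PowerSeries.C ω * f) ≠ 0) :
    (1 - PowerSeries.C ω * f)⁻¹ * (1 - f ^ N) = ∑ k ∈ range N, (PowerSeries.C ω * f) ^ k := by
  have : 1 - f ^ N = (1 - PowerSeries.C ω * f) * ∑ k ∈ range N, (PowerSeries.C ω * f) ^ k := by
    rw [mul_neg_geom_sum, mul_pow, ← map_pow, hω, map_one, one_mul]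
  rw [this, ← mul_assoc, PowerSeries.inv_mul_cancel _ hf, one_mul]

theorem IsPrimitiveRoot.sum_erase_one_inv_one_sub_C_mul_mul_one_sub_pow [DecidableEq K]
    {N : ℕ} {ζ : K} (hζ : IsPrimitiveRoot ζ N) (hN : 0 < N) {f : K⟦X⟧} (hf : constantCoeff f = 1) :
    (∑ ω ∈ (nthRootsFinset N (1 : K)).erase 1, (1 - PowerSeries.C ω * f)⁻¹) * (1 - f ^ N) =
      N - ∑ k ∈ range N, f ^ k := by
  set S := nthRootsFinset N (1 : K)
  have hgeom : ∑ ω ∈ S, ∑ k ∈ range N, (PowerSeries.C ω * f) ^ k = N := by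
    simp_rw [sum_comm (s := S), mul_pow, ← map_pow, ← sum_mul, ← map_sum]
    rw [sum_eq_single_of_mem 0 (mem_range.2 hN)]
    · simp [S, hζ.card_nthRootsFinset]
    · intro k hk hk0
      rw [hζ.sum_nthRootsFinset_pow_eq_zero (Nat.not_dvd_of_pos_of_lt (Nat.pos_of_ne_zero hk0)
        (mem_range.1 hk)), map_zero, zero_mul]
  rw [sum_mul, sum_congr rfl fun ω hω => inv_one_sub_C_mul_mul_one_sub_pow
      ((Polynomial.mem_nthRootsFinset hN 1).1 (mem_of_mem_erase hω)) ?_,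
    sum_erase_eq_sub (one_mem_nthRootsFinset hN), hgeom, map_one, one_mul]
  rw [map_sub, map_one, map_mul, constantCoeff_C, hf, mul_one, sub_ne_zero]
  exact (ne_of_mem_erase hω).symm

theorem IsPrimitiveRoot.X_mul_sum_erase_one_inv_one_sub_C_mul_exp [CharZero K] [DecidableEq K]
    {N : ℕ} {ζ : K} (hζ : IsPrimitiveRoot ζ N) (hN : 0 < N) :
    PowerSeries.X * ∑ ω ∈ (nthRootsFinset N (1 : K)).erase 1, (1 - PowerSeries.C ω * exp K)⁻¹ =
      bernoulliPowerSeries K - rescale (N : K) (bernoulliPowerSeries K) := by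
  set E := exp K
  set B := bernoulliPowerSeries K
  have hrescale : 1 - E ^ N = -rescale (N : K) (E - 1) := by
    rw [map_sub, ← exp_pow_eq_rescale_exp, map_one, neg_sub]
  have hne : 1 - E ^ N ≠ 0 := by
    rw [hrescale, neg_ne_zero]
    intro h
    simpa [E, coeff_rescale, coeff_exp, hN.ne'] using congrArg (PowerSeries.coeff 1) h
  have hB : B * (1 - E ^ N) = -(PowerSeries.X * ∑ k ∈ range N, E ^ k) := by
    rw [← neg_sub, ← geom_sum_mul, mul_neg, ← mul_assoc, mul_comm B,
      mul_assoc, bernoulliPowerSeries_mul_exp_sub_one, mul_comm]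
  have hBN : rescale (N : K) B * (1 - E ^ N) = -((N : K⟦X⟧) * PowerSeries.X) := by
    rw [hrescale, mul_neg, ← map_mul, bernoulliPowerSeries_mul_exp_sub_one, rescale_X,
      map_natCast]
  apply mul_right_cancel₀ hne
  rw [mul_assoc,
    hζ.sum_erase_one_inv_one_sub_C_mul_mul_one_sub_pow hN (constantCoeff_exp (A := K)),
    sub_mul, hB, hBN]
  ring

end PowerSeries

theorem sum_erase_one_twistedBernoulli {N : ℕ} (hN : 0 < N) (n : ℕ) :
    ∑ ω ∈ (nthRootsFinset N (1 : ℂ)).erase 1, twistedBernoulli ω n =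
      (1 - (N : ℂ) ^ (n + 1)) * ((bernoulli (n + 1) : ℚ) : ℂ) / (n + 1) := by
  simp only [twistedBernoulli]
  rw [← mul_sum, ← map_sum, ← coeff_succ_X_mul,
    (Complex.isPrimitiveRoot_exp N hN.ne').X_mul_sum_erase_one_inv_one_sub_C_mul_exp hN,
    map_sub, coeff_rescale, bernoulliPowerSeries, coeff_mk, eq_ratCast, Nat.factorial_succ]
  have hfact : (n.factorial : ℂ) ≠ 0 := Nat.cast_ne_zero.2 n.factorial_ne_zero
  push_cast
  field_simp

/-- For a prime `p`, an integer `c > 1` with `p ∤ c`, and `n ≥ 0`: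
`Σ_{ρ^p=1} Σ_{ξ^c=1, ξ≠1} 𝔅_n(ρξ) = p^{n+1} (1-c^{n+1}) B_{n+1}/(n+1)`. -/
theorem statement17 (p : ℕ) (hp : p.Prime) (c : ℕ) (hc : 1 < c) (hpc : ¬ p ∣ c) (n : ℕ) :
    ∑ ρ ∈ nthRootsFinset p (1 : ℂ), ∑ ξ ∈ (nthRootsFinset c (1 : ℂ)).erase 1,
        twistedBernoulli (ρ * ξ) n =
      (p : ℂ) ^ (n + 1) * (1 - (c : ℂ) ^ (n + 1)) * ((bernoulli (n + 1) : ℚ) : ℂ) /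
        (n + 1) := by
  have hc0 : 0 < c := by omega
  have hpc0 : 0 < p * c := Nat.mul_pos hp.pos hc0
  rw [sum_nthRootsFinset_mul_erase_one_of_coprime hp.pos hc0
      (Complex.isPrimitiveRoot_exp (p * c) hpc0.ne') ((Nat.Prime.coprime_iff_not_dvd hp).2 hpc)
      (twistedBernoulli · n),
    sum_erase_one_twistedBernoulli hpc0, sum_erase_one_twistedBernoulli hp.pos]
  push_cast
  ring
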